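/- arXiv:1901.09278 — 7 statements merged into one kernel-verified Lean document; each statement's English description precedes it below -/
import Mathlib

section
/- Let n, k, s, p, r be integers with 0 < r ≤ p ≤ s+r−2 and r ≤ k, and set q = (k−r)s+p. If F ⊆ C([n],k) is shifted and has property U(s,q), then F ⊆ ⋃_{i=0}^{k−r} A(p+is, r+i, n, k); in particular every F ∈ F satisfies |F ∩ [p+is]| ≥ r+i for some 0 ≤ i ≤ k−r. -/
/-!
Suppose `A ∈ F` lies in none of the families `A(p+is, r+i)`, i.e. `|A ∩ [p+is]| ≤ r+i-1` for all
`i ≤ k-r`: the `(r+i)`-th smallest element of `A` exceeds `p+is`. Then `A` dominates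
coordinatewise each of the `s` sets `G_t = [r-1] ∪ {min (r+t) (p+1)} ∪ {p+2+t+is : i < k-r}`,
`t < s`, so all of them lie in the shifted family `F`. Since `p + 1 - r < s`, the sets `G_t`
together cover `[q+1]`, contradicting `U(s,q)`.
-/

open Finset
open scoped Classical

/-- `F` has property `U(s,q)`: any `s` (not necessarily distinct) members have union of size `≤ q`. -/
def propU (F : Finset (Finset ℕ)) (s q : ℕ) : Prop :=
  ∀ G : Fin s → Finset ℕ, (∀ i, G i ∈ F) → (Finset.univ.sup G).card ≤ q

/-- `A(p,r,n,k)`: the `k`-subsets of `[n] = {1,…,n}` meeting `[p]` in at least `r` elements. -/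
def famA (p r n k : ℕ) : Finset (Finset ℕ) :=
  (Finset.powersetCard k (Finset.Icc 1 n)).filter fun A => r ≤ (A ∩ Finset.Icc 1 p).card

/-- `G ≼ F`: comparing the increasing enumerations elementwise. -/
def shiftLE (G F : Finset ℕ) : Prop :=
  List.Forall₂ (· ≤ ·) (G.sort (· ≤ ·)) (F.sort (· ≤ ·))

/-- `F ⊆ C([n],k)` is shifted. -/
def IsShifted (n k : ℕ) (F : Finset (Finset ℕ)) : Prop :=
  ∀ A ∈ F, ∀ G ∈ Finset.powersetCard k (Finset.Icc 1 n), shiftLE G A → G ∈ F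

/-- `m(n,k,s,q)`: the maximum size of a family `F ⊆ C([n],k)` with property `U(s,q)`. -/
noncomputable def mMax (n k s q : ℕ) : ℕ :=
  ((Finset.powersetCard k (Finset.Icc 1 n)).powerset.filter fun F => propU F s q).sup
    Finset.card

namespace Finset

theorem lt_card_filter_le_of_orderEmbOfFin_le {α : Type*} [LinearOrder α] {A : Finset α} {k : ℕ}
    (hA : #A = k) {j : Fin k} {m : α} (hjm : A.orderEmbOfFin hA j ≤ m) :
    (j : ℕ) < #(A.filter (· ≤ m)) := by
  have hsub : (Iic j).image (A.orderEmbOfFin hA) ⊆ A.filter (· ≤ m) := by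
    intro x hx
    obtain ⟨i, hi, rfl⟩ := mem_image.1 hx
    exact mem_filter.2
      ⟨orderEmbOfFin_mem A hA i, ((A.orderEmbOfFin hA).monotone (mem_Iic.1 hi)).trans hjm⟩
  have := card_le_card hsub
  rw [card_image_of_injective _ (A.orderEmbOfFin hA).injective, Fin.card_Iic] at this
  omega

end Finset

theorem lt_orderEmbOfFin_of_card_inter_Icc_le {A : Finset ℕ} (hA0 : 0 ∉ A) {k : ℕ} (hA : #A = k)
    {j : Fin k} {m : ℕ} (h : #(A ∩ Icc 1 m) ≤ j) : m < A.orderEmbOfFin hA j := by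
  by_contra! hjm
  have hsub : A.filter (· ≤ m) ⊆ A ∩ Icc 1 m := fun x hx => by
    obtain ⟨hxA, hxm⟩ := mem_filter.1 hx
    have : x ≠ 0 := fun h => hA0 (h ▸ hxA)
    exact mem_inter.2 ⟨hxA, mem_Icc.2 ⟨by omega, hxm⟩⟩
  have := (lt_card_filter_le_of_orderEmbOfFin_le hA hjm).trans_le (card_le_card hsub)
  omega

theorem shiftLE_image_range {A : Finset ℕ} {k : ℕ} (hA : #A = k) {f : ℕ → ℕ} (hf : StrictMono f)
    (hle : ∀ j : Fin k, f j ≤ A.orderEmbOfFin hA j) : shiftLE ((range k).image f) A := by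
  have hmap : (range k).image f = (range k).map ⟨f, hf.injective⟩ := by ext; simp
  rw [shiftLE, hmap, ← (hf.strictMonoOn _).map_finsetSort, sort_range,
    ← listMap_orderEmbOfFin_finRange A hA, ← List.map_coe_finRange_eq_range, List.map_map,
    List.forall₂_map_left_iff, List.forall₂_map_right_iff, List.forall₂_same]
  exact fun j _ => hle j

/-- `coverSeq p r s t` enumerates `[r-1] ∪ {min (r+t) (p+1)} ∪ {p + 2 + t + i s : i ∈ ℕ}`
increasingly. For `t < s` the first `k` terms of these `s` sequences cover `[p + (k-r) s + 1]`. -/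
def coverSeq (p r s t m : ℕ) : ℕ :=
  if m + 1 < r then m + 1
  else if m + 1 = r then min (r + t) (p + 1)
  else p + 2 + t + (m - r) * s

section coverSeq

variable {p r s t : ℕ}

theorem coverSeq_pos (m : ℕ) : 0 < coverSeq p r s t m := by
  unfold coverSeq
  split_ifs <;> omega

theorem coverSeq_strictMono (hrp : r ≤ p + 1) (hs : 0 < s) : StrictMono (coverSeq p r s t) := by
  refine strictMono_nat_of_lt_succ fun m => ?_
  rcases lt_or_ge m r with hmr | hmr
  · have : m + 1 - r = 0 := by omega
    unfold coverSeq
    split_ifs <;> omega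
  · have : (m + 1 - r) * s = (m - r) * s + s := by rw [Nat.sub_add_comm hmr, add_one_mul]
    unfold coverSeq
    split_ifs <;> omega

theorem coverSeq_le_orderEmbOfFin {k : ℕ} {A : Finset ℕ} (hA0 : 0 ∉ A) (hA : #A = k)
    (hsmall : ∀ i ≤ k - r, #(A ∩ Icc 1 (p + i * s)) < r + i) (ht : t < s) (j : Fin k) :
    coverSeq p r s t j ≤ A.orderEmbOfFin hA j := by
  have hbound : ∀ m, #(A ∩ Icc 1 m) ≤ j → m < A.orderEmbOfFin hA j :=
    fun m => lt_orderEmbOfFin_of_card_inter_Icc_le hA0 hA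
  have hpos : (j : ℕ) < A.orderEmbOfFin hA j :=
    hbound j ((card_le_card inter_subset_right).trans (by simp))
  have hlarge : r ≤ j + 1 → p + (j + 1 - r) * s < A.orderEmbOfFin hA j := fun hrj =>
    hbound _ (Nat.le_of_lt_succ ((hsmall _ (by omega)).trans_le (by omega)))
  unfold coverSeq
  split_ifs with h₁ h₂
  · omega
  · have := hlarge h₂.ge
    rw [h₂, Nat.sub_self, zero_mul] at this
    omega
  · have := hlarge (by omega)
    rw [Nat.sub_add_comm (by omega), add_one_mul] at this
    omega

theorem Icc_subset_biUnion_coverSeq {k : ℕ} (hr : 0 < r) (hrk : r ≤ k) (hrp : r ≤ p + 1)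
    (hps : p + 2 ≤ s + r) :
    Icc 1 (p + (k - r) * s + 1) ⊆
      (range s).biUnion fun t => (range k).image (coverSeq p r s t) := by
  intro x hx
  obtain ⟨hx1, hxq⟩ := mem_Icc.1 hx
  suffices ∃ t < s, ∃ m < k, coverSeq p r s t m = x by simpa using this
  have hs : 0 < s := by omega
  rcases lt_or_ge x r with hxr | hxr
  · exact ⟨0, hs, x - 1, by omega, by unfold coverSeq; split_ifs <;> omega⟩
  rcases lt_or_ge x (p + 2) with hxp | hxp
  · exact ⟨x - r, by omega, r - 1, by omega, by unfold coverSeq; split_ifs <;> omega⟩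
  · obtain ⟨u, hu, v, hv, huv⟩ : ∃ u < k - r, ∃ v < s, v + u * s = x - (p + 2) :=
      ⟨_, (Nat.div_lt_iff_lt_mul hs).2 (by omega), _, Nat.mod_lt _ hs, Nat.mod_add_div' _ _⟩
    refine ⟨v, hv, r + u, by omega, ?_⟩
    rw [coverSeq, if_neg (by omega), if_neg (by omega), Nat.add_sub_cancel_left]
    omega

end coverSeq

theorem IsShifted.image_range_mem {n k : ℕ} {F : Finset (Finset ℕ)} (hF : IsShifted n k F)
    {A : Finset ℕ} (hA : A ∈ F) (hAn : A ⊆ Icc 1 n) (hAk : #A = k) {f : ℕ → ℕ}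
    (hf : StrictMono f) (hf0 : ∀ m, 0 < f m) (hle : ∀ j : Fin k, f j ≤ A.orderEmbOfFin hAk j) :
    (range k).image f ∈ F := by
  refine hF A hA _ (mem_powersetCard.2 ⟨fun x hx => ?_, ?_⟩) (shiftLE_image_range hAk hf hle)
  · obtain ⟨m, hm, rfl⟩ := mem_image.1 hx
    have hmk : m < k := mem_range.1 hm
    have hAm := mem_Icc.1 (hAn (orderEmbOfFin_mem A hAk ⟨m, hmk⟩))
    exact mem_Icc.2 ⟨hf0 m, (hle ⟨m, hmk⟩).trans hAm.2⟩
  · rw [card_image_of_injective _ hf.injective, card_range]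

theorem propU.card_biUnion_range_le {F : Finset (Finset ℕ)} {s q : ℕ} (hU : propU F s q)
    {G : ℕ → Finset ℕ} (hG : ∀ t < s, G t ∈ F) : #((range s).biUnion G) ≤ q := by
  have hsup : univ.sup (fun t : Fin s => G t) = (range s).biUnion G := by
    ext x
    simp
  exact hsup ▸ hU _ fun t => hG t t.isLt

/-- Proposition 1.5 of the paper. -/
theorem stmt3 (n k s p r q : ℕ) (hr : 0 < r) (hrp : r ≤ p) (hp : p ≤ s + r - 2)
    (hrk : r ≤ k) (hq : q = (k - r) * s + p)
    (F : Finset (Finset ℕ)) (hF : F ⊆ Finset.powersetCard k (Finset.Icc 1 n))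
    (hshift : IsShifted n k F) (hU : propU F s q) :
    ∀ A ∈ F, ∃ i ≤ k - r, A ∈ famA (p + i * s) (r + i) n k := by
  intro A hA
  by_contra! hfar
  have hAC := hF hA
  obtain ⟨hAn, hAk⟩ := mem_powersetCard.1 hAC
  have hsmall : ∀ i ≤ k - r, #(A ∩ Icc 1 (p + i * s)) < r + i := fun i hi => by
    simpa [famA, hAC] using hfar i hi
  have hcoverF : ∀ t < s, (range k).image (coverSeq p r s t) ∈ F := fun t ht =>
    hshift.image_range_mem hA hAn hAk (coverSeq_strictMono (by omega) (by omega)) coverSeq_pos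
      (coverSeq_le_orderEmbOfFin (fun h => by simpa using hAn h) hAk hsmall ht)
  have hcover := Icc_subset_biUnion_coverSeq (p := p) (s := s) hr hrk (by omega) (by omega)
  have := (card_le_card hcover).trans (hU.card_biUnion_range_le hcoverF)
  rw [Nat.card_Icc] at this
  omega
end

section
/- Let n, s, r be integers with n > s+r and s > r ≥ 1, and let F ⊆ C([n],2) have property U(s, s+r). Then |F| ≤ max{ C(n,2) − C(n−r,2), C(s+r,2) }. -/
/-!
If the members of `F` cover at most `s + r` points, then `|F| ≤ C(s + r, 2)`. Otherwise `F` has no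
`r + 1` pairwise disjoint edges: such a matching covers `2r + 2` points, and adding edges that each
cover a new point gives at most `s` edges covering more than `s + r` points. It then suffices to
prove the Erdős–Gallai bound `|F| ≤ max (C(n, 2) - C(n - r, 2)) (C(2r + 1, 2))` for graphs on
`[1, n]` with matching number at most `r`. Shifting (UV-compressing `{y}` to `{x}` for `x < y`)
preserves the size, the vertex set and the matching bound, and in a fully shifted graph one of the
`r + 1` disjoint pairs `{j + 1, 2r + 2 - j}` is missing. This forces every edge to meet `[1, j]` or
to lie in `[j + 1, 2r + 1 - j]`, and the resulting count is convex in `j`, hence at most its value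
at `j = 0` or `j = r`.
-/

open Finset
open scoped Classical

open UV
open scoped FinsetFamily

lemma choose_two_sub_add_choose_two_le_max {n r j : ℕ} (hjr : j ≤ r) (hrn : r ≤ n) :
    n.choose 2 - (n - j).choose 2 + (2 * r + 1 - 2 * j).choose 2 ≤
      max (n.choose 2 - (n - r).choose 2) ((2 * r + 1).choose 2) := by
  set f : ℕ → ℕ := fun i => n.choose 2 - (n - i).choose 2 + (2 * r + 1 - 2 * i).choose 2
  have hf : ∀ i ≤ r, (f i : ℚ) = i * (2 * n - i - 1) / 2 + (2 * r + 1 - 2 * i) * (r - i) := by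
    intro i hi
    simp only [f]
    rw [Nat.cast_add, Nat.cast_sub (Nat.choose_le_choose 2 (n.sub_le i)), Nat.cast_choose_two,
      Nat.cast_choose_two, Nat.cast_choose_two, Nat.cast_sub (by omega), Nat.cast_sub (by omega)]
    push_cast
    ring
  -- `f` is a convex quadratic in `i`, so it lies below its chord on `[0, r]`.
  have hchord : (r : ℚ) * f j + 3 / 2 * r * j * (r - j) = (r - j) * f 0 + j * f r := by
    rw [hf j hjr, hf 0 (Nat.zero_le r), hf r le_rfl]
    push_cast
    ring
  have hfr : f r = n.choose 2 - (n - r).choose 2 := by simp [f]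
  rw [← hfr]
  set M := max (f r) ((2 * r + 1).choose 2)
  have h0 : f 0 ≤ M := le_max_of_le_right (by simp [f])
  rcases Nat.eq_zero_or_pos r with rfl | hr
  · obtain rfl : j = 0 := by omega
    exact h0
  have hj : (0 : ℚ) ≤ r - j := sub_nonneg.2 (by exact_mod_cast hjr)
  suffices (r : ℚ) * f j ≤ r * M by
    exact_mod_cast le_of_mul_le_mul_left this (by exact_mod_cast hr)
  have h0' := mul_le_mul_of_nonneg_left (show (f 0 : ℚ) ≤ M by exact_mod_cast h0) hj
  have h1' := mul_le_mul_of_nonneg_left (show (f r : ℚ) ≤ M by exact_mod_cast le_max_left _ _)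
    (Nat.cast_nonneg (α := ℚ) j)
  have hgap : (0 : ℚ) ≤ r * j * (r - j) := mul_nonneg (by positivity) hj
  linarith

namespace Finset

variable {α : Type*} [DecidableEq α] {i j : α} {s : Finset α}

lemma image_swap_of_mem_of_notMem (hi : i ∈ s) (hj : j ∉ s) :
    s.image (Equiv.swap i j) = (s ∪ {j}) \ {i} := by
  apply coe_injective
  push_cast
  rw [Equiv.image_swap_of_mem_of_notMem hi hj, Set.union_singleton]

lemma image_swap_of_notMem_of_notMem (hi : i ∉ s) (hj : j ∉ s) :
    s.image (Equiv.swap i j) = s := by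
  conv_rhs => rw [← image_id (s := s)]
  exact image_congr fun a ha => Equiv.swap_apply_of_ne_of_ne (ne_of_mem_of_not_mem ha hi)
    (ne_of_mem_of_not_mem ha hj)

end Finset

namespace UV

variable {α : Type*} [DecidableEq α] {i j : α} {A : Finset α} {G : Finset (Finset α)}

lemma compress_singleton_eq_image_swap (hi : i ∉ A) (hj : j ∈ A) :
    compress {i} {j} A = A.image (Equiv.swap i j) := by
  rw [compress_of_disjoint_of_le (disjoint_singleton_left.2 hi) (singleton_subset_iff.2 hj),
    Equiv.swap_comm, image_swap_of_mem_of_notMem hj hi, sup_eq_union]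

lemma notMem_and_mem_of_compress_ne (h : compress {i} {j} A ≠ A) : i ∉ A ∧ j ∈ A := by
  by_contra hc
  rw [← disjoint_singleton_left, ← singleton_subset_iff] at hc
  exact h (if_neg hc)

lemma image_swap_mem_of_mem_compression {B : Finset α} (h : B ∈ 𝓒 {i} {j} G)
    (hB : i ∉ B ∨ B ∉ G) : B.image (Equiv.swap i j) ∈ G := by
  by_cases hBG : B ∈ G
  · have hi : i ∉ B := hB.resolve_right (not_not.2 hBG)
    by_cases hj : j ∈ B
    · rw [← compress_singleton_eq_image_swap hi hj]
      exact ((mem_compression.1 h).resolve_right fun h' => h'.1 hBG).2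
    · rwa [image_swap_of_notMem_of_notMem hi hj]
  · have hi : i ∈ B := singleton_subset_iff.1 (le_of_mem_compression_of_notMem h hBG)
    have hj : j ∉ B := disjoint_singleton_left.1 (disjoint_of_mem_compression_of_notMem h hBG)
    rw [image_swap_of_mem_of_notMem hi hj]
    exact sup_sdiff_mem_of_mem_compression_of_notMem h hBG

lemma compression_subset_powersetCard {X u v : Finset α} {k : ℕ}
    (huv : #u = #v) (hu : u ⊆ X) (hG : G ⊆ powersetCard k X) :
    𝓒 u v G ⊆ powersetCard k X := by
  intro A hA
  obtain ⟨hA, -⟩ | ⟨-, B, hB, rfl⟩ := mem_compression.1 hA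
  · exact hG hA
  obtain ⟨hBX, hBk⟩ := mem_powersetCard.1 (hG hB)
  refine mem_powersetCard.2 ⟨?_, (card_compress huv B).trans hBk⟩
  unfold compress
  split_ifs
  · exact sdiff_subset.trans (union_subset hBX hu)
  · exact hBX

end UV

section Families

variable {α : Type*} [DecidableEq α]

def MatchingNumberLE (G : Finset (Finset α)) (k : ℕ) : Prop :=
  ∀ M ⊆ G, (M : Set (Finset α)).PairwiseDisjoint id → #M ≤ k

lemma MatchingNumberLE.compression {G : Finset (Finset α)} {k : ℕ} (i j : α)
    (h : MatchingNumberLE G k) : MatchingNumberLE (𝓒 {i} {j} G) k := by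
  intro M hM hdisj
  by_cases hMG : M ⊆ G
  · exact h M hMG hdisj
  -- A member of `M` outside `G` contains `i`, so the others avoid `i`; swapping `i` and `j`
  -- then moves all of `M` into `G`.
  obtain ⟨B₀, hB₀M, hB₀G⟩ := not_subset.1 hMG
  have hiB₀ : i ∈ B₀ := singleton_subset_iff.1 (le_of_mem_compression_of_notMem (hM hB₀M) hB₀G)
  have hswap : ∀ B ∈ M, B.image (Equiv.swap i j) ∈ G := by
    intro B hB
    refine image_swap_mem_of_mem_compression (hM hB) ?_
    by_cases hBB₀ : B = B₀
    · exact .inr (hBB₀ ▸ hB₀G)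
    · exact .inl fun hiB => disjoint_left.1 (hdisj hB hB₀M hBB₀) hiB hiB₀
  have hinj : Function.Injective (image (Equiv.swap i j)) :=
    image_injective (Equiv.swap i j).injective
  rw [← card_image_of_injective M hinj]
  refine h _ (image_subset_iff.2 hswap) ?_
  rw [coe_image, hinj.injOn.pairwiseDisjoint_image]
  exact fun B hB C hC hBC => (disjoint_image (Equiv.swap i j).injective).2 (hdisj hB hC hBC)

lemma card_le_choose_card_sup {G : Finset (Finset α)} {k : ℕ} {X : Finset α}
    (hG : G ⊆ powersetCard k X) :
    #G ≤ (#(G.sup id)).choose k := by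
  have hsub : G ⊆ powersetCard k (G.sup id) := fun e he =>
    mem_powersetCard.2 ⟨le_sup (f := id) he, (mem_powersetCard.1 (hG he)).2⟩
  simpa using card_le_card hsub

lemma exists_superset_card_sup_ge {E F : Finset (Finset α)} (hEF : E ⊆ F) (t : ℕ) :
    ∃ E', E ⊆ E' ∧ E' ⊆ F ∧ #E' ≤ #E + t ∧
      min #(F.sup id) (#(E.sup id) + t) ≤ #(E'.sup id) := by
  induction t with
  | zero => exact ⟨E, Subset.rfl, hEF, le_rfl, min_le_right _ _⟩
  | succ t ih =>
    obtain ⟨E', hEE', hE'F, hcard, hsup⟩ := ih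
    by_cases hcov : F.sup id ⊆ E'.sup id
    · exact ⟨E', hEE', hE'F, by omega, (min_le_left _ _).trans (card_le_card hcov)⟩
    obtain ⟨v, hvF, hvE'⟩ := not_subset.1 hcov
    obtain ⟨f, hf, hvf⟩ := mem_sup.1 hvF
    have hgrow : insert v (E'.sup id) ⊆ (insert f E').sup id := by
      rw [sup_insert]
      exact insert_subset (mem_union_left _ hvf) subset_union_right
    refine ⟨insert f E', hEE'.trans (subset_insert _ _), insert_subset hf hE'F,
      (card_insert_le _ _).trans (by omega), ?_⟩
    have := card_le_card hgrow
    rw [card_insert_of_notMem hvE'] at this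
    omega

end Families

lemma propU.card_sup_le {F E : Finset (Finset ℕ)} {s q : ℕ} (hU : propU F s q) (hEF : E ⊆ F)
    (hE : E.Nonempty) (hEs : #E ≤ s) : #(E.sup id) ≤ q := by
  obtain ⟨e⟩ : Nonempty (E ↪ Fin s) :=
    Function.Embedding.nonempty_of_card_le (by simpa using hEs)
  have : Nonempty E := hE.coe_sort
  set G : Fin s → Finset ℕ := fun i => ((Function.invFun e i : E) : Finset ℕ)
  have hG : univ.image G = E := by
    ext A
    refine ⟨fun hA => ?_, fun hA => mem_image.2 ⟨e ⟨A, hA⟩, mem_univ _, ?_⟩⟩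
    · obtain ⟨i, -, rfl⟩ := mem_image.1 hA
      exact (Function.invFun e i : E).2
    · simp [G, Function.leftInverse_invFun e.injective _]
  have := hU G fun i => hEF (Function.invFun e i : E).2
  rwa [← hG, sup_image]

lemma matchingNumberLE_of_propU {F : Finset (Finset ℕ)} {X : Finset ℕ} {s r : ℕ}
    (hF : F ⊆ powersetCard 2 X) (hrs : r < s) (hU : propU F s (s + r))
    (hcov : s + r < #(F.sup id)) : MatchingNumberLE F r := by
  intro M hMF hM
  by_contra! hbig
  obtain ⟨M', hM'M, hM'card⟩ := exists_subset_card_eq (s := M) (n := r + 1) hbig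
  have hsupM' : #(M'.sup id) = 2 * (r + 1) := by
    rw [sup_eq_biUnion, card_biUnion (hM.subset hM'M), ← hM'card, card_eq_sum_ones, mul_sum,
      mul_one]
    exact sum_congr rfl fun e he => (mem_powersetCard.1 (hF (hMF (hM'M he)))).2
  -- Adding edges to `M'` that each cover a new point yields `s` edges covering `s + r + 1` points.
  obtain ⟨E, hM'E, hEF, hEcard, hEsup⟩ :=
    exists_superset_card_sup_ge (hM'M.trans hMF) (s - (r + 1))
  have hne : E.Nonempty := (card_pos.1 (by omega : 0 < #M')).mono hM'E
  have := hU.card_sup_le hEF hne (by omega)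
  omega

def familyWeight (G : Finset (Finset ℕ)) : ℕ := ∑ A ∈ G, ∑ a ∈ A, a

def IsLeftCompressed (n : ℕ) (G : Finset (Finset ℕ)) : Prop :=
  ∀ ⦃x y : ℕ⦄, 1 ≤ x → x < y → y ≤ n → UV.IsCompressed {x} {y} G

lemma sum_image_swap_lt {A : Finset ℕ} {i j : ℕ} (hij : i < j) (hi : i ∉ A) (hj : j ∈ A) :
    ∑ a ∈ A.image (Equiv.swap i j), a < ∑ a ∈ A, a := by
  rw [sum_image fun a _ b _ h => (Equiv.swap i j).injective h]
  refine sum_lt_sum (fun a ha => ?_) ⟨j, hj, by rw [Equiv.swap_apply_right]; exact hij⟩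
  rcases eq_or_ne a j with rfl | haj
  · rw [Equiv.swap_apply_right]; exact hij.le
  · rw [Equiv.swap_apply_of_ne_of_ne (ne_of_mem_of_not_mem ha hi) haj]

lemma familyWeight_compression_lt {G : Finset (Finset ℕ)} {i j : ℕ} (hij : i < j)
    (hG : ¬ UV.IsCompressed {i} {j} G) : familyWeight (𝓒 {i} {j} G) < familyWeight G := by
  have hmoved : (G.filter fun A => compress {i} {j} A ∉ G).Nonempty := by
    rw [nonempty_iff_ne_empty]
    intro hempty
    refine hG ?_
    rw [IsCompressed, compression, filter_image, hempty, image_empty, union_empty]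
    exact filter_true_of_mem fun A hA => not_not.1 (filter_eq_empty_iff.1 hempty hA)
  have hlt : ∀ A ∈ G.filter (fun A => compress {i} {j} A ∉ G),
      ∑ a ∈ compress {i} {j} A, a < ∑ a ∈ A, a := by
    intro A hA
    obtain ⟨hAG, hcA⟩ := mem_filter.1 hA
    obtain ⟨hi, hj⟩ := notMem_and_mem_of_compress_ne fun h => hcA (h ▸ hAG)
    rw [compress_singleton_eq_image_swap hi hj]
    exact sum_image_swap_lt hij hi hj
  unfold familyWeight
  calc ∑ A ∈ 𝓒 {i} {j} G, ∑ a ∈ A, a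
      = ∑ A ∈ G.filter (fun A => compress {i} {j} A ∈ G), ∑ a ∈ A, a +
          ∑ A ∈ G.filter (fun A => compress {i} {j} A ∉ G), ∑ a ∈ compress {i} {j} A, a := by
        rw [compression, sum_union compress_disjoint, filter_image, sum_image compress_injOn]
    _ < ∑ A ∈ G.filter (fun A => compress {i} {j} A ∈ G), ∑ a ∈ A, a +
          ∑ A ∈ G.filter (fun A => compress {i} {j} A ∉ G), ∑ a ∈ A, a :=
        Nat.add_lt_add_left (sum_lt_sum_of_nonempty hmoved hlt) _
    _ = ∑ A ∈ G, ∑ a ∈ A, a := sum_filter_add_sum_filter_not ..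

lemma exists_isLeftCompressed {n : ℕ} (P : Finset (Finset ℕ) → Prop)
    (hP : ∀ G x y, 1 ≤ x → x < y → y ≤ n → P G → P (𝓒 {x} {y} G))
    (G : Finset (Finset ℕ)) (hG : P G) : ∃ H, P H ∧ #H = #G ∧ IsLeftCompressed n H := by
  induction hw : familyWeight G using Nat.strong_induction_on generalizing G with
  | _ w ih =>
  by_cases hc : IsLeftCompressed n G
  · exact ⟨G, hG, rfl, hc⟩
  simp only [IsLeftCompressed, not_forall] at hc
  obtain ⟨x, y, hx, hxy, hyn, hxyG⟩ := hc
  obtain ⟨H, hPH, hcard, hH⟩ := ih _ (hw ▸ familyWeight_compression_lt hxy hxyG)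
    (𝓒 {x} {y} G) (hP G x y hx hxy hyn hG) rfl
  exact ⟨H, hPH, hcard.trans (card_compression _ _ _), hH⟩

lemma IsLeftCompressed.pair_mem {n : ℕ} {H : Finset (Finset ℕ)} (hH : IsLeftCompressed n H)
    {a b x : ℕ} (hab : {a, b} ∈ H) (hne : a ≠ b) (hx : 1 ≤ x) (hxa : x ≤ a) (han : a ≤ n)
    (hxb : x ≠ b) : {x, b} ∈ H := by
  rcases hxa.eq_or_lt with rfl | hlt
  · exact hab
  have := compress_mem_compression (u := {x}) (v := {a}) hab
  rwa [(hH hx hlt han).eq, compress_singleton_eq_image_swap (by simp [hlt.ne, hxb]) (by simp),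
    image_insert, image_singleton, Equiv.swap_apply_right,
    Equiv.swap_apply_of_ne_of_ne hxb.symm hne.symm] at this

lemma exists_pair_notMem_of_matchingNumberLE {H : Finset (Finset ℕ)} {r : ℕ}
    (hH : MatchingNumberLE H r) : ∃ j ≤ r, {j + 1, 2 * r + 2 - j} ∉ H := by
  by_contra! hall
  set pair : ℕ → Finset ℕ := fun j => {j + 1, 2 * r + 2 - j}
  have hinj : Set.InjOn pair (range (r + 1)) := by
    intro j hj j' hj' hjj'
    have : j + 1 ∈ pair j' := hjj' ▸ mem_insert_self _ _
    simp only [coe_range, Set.mem_Iio, pair, mem_insert, mem_singleton] at hj hj' this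
    omega
  have hdisj : ((range (r + 1)).image pair : Set (Finset ℕ)).PairwiseDisjoint id := by
    rw [coe_image, hinj.pairwiseDisjoint_image]
    intro j hj j' hj' hjj'
    simp only [coe_range, Set.mem_Iio] at hj hj'
    simp only [Function.comp_apply, id, pair, disjoint_left, mem_insert, mem_singleton]
    omega
  have := hH _ (image_subset_iff.2 fun j hj => hall j (by simpa [Nat.lt_succ_iff] using hj)) hdisj
  rw [card_image_of_injOn hinj, card_range] at this
  omega

lemma IsLeftCompressed.exists_subset {n r : ℕ} {H : Finset (Finset ℕ)}
    (hc : IsLeftCompressed n H) (hH : H ⊆ powersetCard 2 (Icc 1 n)) (hν : MatchingNumberLE H r) :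
    ∃ j ≤ r, H ⊆ (powersetCard 2 (Icc 1 n) \ powersetCard 2 (Icc (j + 1) n)) ∪
      powersetCard 2 (Icc (j + 1) (2 * r + 1 - j)) := by
  obtain ⟨j, hjr, hmissing⟩ := exists_pair_notMem_of_matchingNumberLE hν
  refine ⟨j, hjr, fun e he => ?_⟩
  by_contra hcon
  simp only [mem_union, mem_sdiff, hH he, true_and, not_or, not_not] at hcon
  obtain ⟨hlow, hhigh⟩ := hcon
  obtain ⟨a, b, hab, rfl⟩ := card_eq_two.1 (mem_powersetCard.1 hlow).2
  -- Shifting down an edge that avoids `[1, j]` and leaves `[1, 2r + 1 - j]` gives the missing pair.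
  have key : ∀ a b, ({a, b} : Finset ℕ) ∈ H → a ≠ b → j + 1 ≤ a → a ≤ n → 2 * r + 2 - j ≤ b →
      b ≤ n → False :=
    fun a b he hab ha han hb hbn => by
      have h₁ : {j + 1, b} ∈ H := hc.pair_mem he hab (by omega) ha han (by omega)
      have h₂ : {2 * r + 2 - j, j + 1} ∈ H :=
        hc.pair_mem (pair_comm (j + 1) b ▸ h₁) (by omega) (by omega) hb hbn (by omega)
      exact hmissing (by rwa [pair_comm])
  simp only [mem_powersetCard, insert_subset_iff, singleton_subset_iff, mem_Icc] at hlow hhigh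
  by_cases hb : 2 * r + 2 - j ≤ b
  · exact key a b he hab (by omega) (by omega) hb (by omega)
  · exact key b a (pair_comm a b ▸ he) hab.symm (by omega) (by omega) (by omega) (by omega)

lemma card_powersetCard_two_sdiff (n j : ℕ) :
    #(powersetCard 2 (Icc 1 n) \ powersetCard 2 (Icc (j + 1) n)) =
      n.choose 2 - (n - j).choose 2 := by
  rw [card_sdiff_of_subset (powersetCard_mono (Icc_subset_Icc_left (by omega))),
    card_powersetCard, card_powersetCard, Nat.card_Icc, Nat.card_Icc, Nat.add_sub_cancel,
    Nat.add_sub_add_right]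

/-- The Erdős–Gallai theorem on graphs with bounded matching number. -/
theorem card_le_max_of_matchingNumberLE {n r : ℕ} {H : Finset (Finset ℕ)} (hrn : r ≤ n)
    (hH : H ⊆ powersetCard 2 (Icc 1 n)) (hν : MatchingNumberLE H r) :
    #H ≤ max (n.choose 2 - (n - r).choose 2) ((2 * r + 1).choose 2) := by
  obtain ⟨H', ⟨hH'n, hH'ν⟩, hcard, hc⟩ :=
    exists_isLeftCompressed (n := n)
      (fun G => G ⊆ powersetCard 2 (Icc 1 n) ∧ MatchingNumberLE G r)
      (fun G x y hx hxy hyn hG => ⟨compression_subset_powersetCard rfl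
        (singleton_subset_iff.2 (mem_Icc.2 ⟨hx, by omega⟩)) hG.1, hG.2.compression x y⟩)
      H ⟨hH, hν⟩
  obtain ⟨j, hjr, hsub⟩ := hc.exists_subset hH'n hH'ν
  rw [← hcard]
  calc #H' ≤ #(powersetCard 2 (Icc 1 n) \ powersetCard 2 (Icc (j + 1) n)) +
        #(powersetCard 2 (Icc (j + 1) (2 * r + 1 - j))) :=
        (card_le_card hsub).trans (card_union_le _ _)
    _ = n.choose 2 - (n - j).choose 2 + (2 * r + 1 - 2 * j).choose 2 := by
        rw [card_powersetCard_two_sdiff, card_powersetCard, Nat.card_Icc]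
        congr 2
        omega
    _ ≤ _ := choose_two_sub_add_choose_two_le_max hjr hrn

theorem stmt4_general (n s r : ℕ) (hn : n > s + r) (hsr : s > r)
    (F : Finset (Finset ℕ)) (hF : F ⊆ Finset.powersetCard 2 (Finset.Icc 1 n))
    (hU : propU F s (s + r)) :
    F.card ≤ max (Nat.choose n 2 - Nat.choose (n - r) 2) (Nat.choose (s + r) 2) := by
  by_cases hcov : #(F.sup id) ≤ s + r
  · calc #F ≤ (#(F.sup id)).choose 2 := card_le_choose_card_sup hF
      _ ≤ (s + r).choose 2 := Nat.choose_le_choose 2 hcov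
      _ ≤ _ := le_max_right _ _
  · calc #F ≤ max (n.choose 2 - (n - r).choose 2) ((2 * r + 1).choose 2) :=
          card_le_max_of_matchingNumberLE (by omega) hF
            (matchingNumberLE_of_propU hF hsr hU (by omega))
      _ ≤ _ := max_le_max le_rfl (Nat.choose_le_choose 2 (by omega))

/-- the complete solution for `k = 2` (Theorem 2.1 of the paper). -/
theorem stmt4 (n s r : ℕ) (hn : n > s + r) (hsr : s > r) (hr : 1 ≤ r)
    (F : Finset (Finset ℕ)) (hF : F ⊆ Finset.powersetCard 2 (Finset.Icc 1 n))
    (hU : propU F s (s + r)) :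
    F.card ≤ max (Nat.choose n 2 - Nat.choose (n - r) 2) (Nat.choose (s + r) 2) :=
  stmt4_general n s r hn hsr F hF hU
end

section
/- Let n, k, s, q be integers with s ≥ 2 and k ≤ q ≤ k+s−2 and n > q. Then m(n,k,s,q) = C(q,k); that is, every F ⊆ C([n],k) with property U(s,q) satisfies |F| ≤ C(q,k), and C([q],k) (viewed inside C([n],k)) attains this bound. -/
open Finset
open scoped Classical

/-!
If `F ⊆ C([n],k)` has property `U(s,q)` with `q ≤ k + s - 2`, then `|⋃ F| ≤ q`: otherwise,
starting from any member and repeatedly adding a member that contains a point not yet covered,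
`s` members would already cover at least `k + s - 1 > q` points. Hence `F ⊆ C(⋃ F, k)` has at
most `C(q,k)` members, and `C([q],k)` attains this.
-/

theorem Fin.univ_sup_cons {α : Type*} [SemilatticeSup α] [OrderBot α] {m : ℕ}
    (a : α) (f : Fin m → α) :
    univ.sup (Fin.cons a f : Fin (m + 1) → α) = a ⊔ univ.sup f := by
  simp [Fin.univ_succ, Function.comp_def]

theorem exists_fin_members_min_card_sup_le {α : Type*} [DecidableEq α]
    {F : Finset (Finset α)} {A₀ : Finset α} (hA₀ : A₀ ∈ F) (m : ℕ) :
    ∃ G : Fin (m + 1) → Finset α, (∀ i, G i ∈ F) ∧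
      min (F.sup id).card (A₀.card + m) ≤ (univ.sup G).card := by
  induction m with
  | zero => exact ⟨fun _ => A₀, fun _ => hA₀, by simp⟩
  | succ m ih =>
    obtain ⟨G, hGF, hG⟩ := ih
    by_cases hcover : F.sup id ⊆ univ.sup G
    · refine ⟨Fin.cons A₀ G, Fin.cases hA₀ hGF, ?_⟩
      have hle : (F.sup id).card ≤ (univ.sup (Fin.cons A₀ G : Fin (m + 2) → _)).card := by
        rw [Fin.univ_sup_cons]
        exact card_le_card (hcover.trans subset_union_right)
      exact (min_le_left _ _).trans hle
    · obtain ⟨x, hxF, hxG⟩ := not_subset.mp hcover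
      obtain ⟨A, hA, hxA⟩ := mem_sup.mp hxF
      refine ⟨Fin.cons A G, Fin.cases hA hGF, ?_⟩
      have hlt : (univ.sup G).card < (univ.sup (Fin.cons A G : Fin (m + 2) → _)).card := by
        rw [Fin.univ_sup_cons]
        exact card_lt_card (ssubset_iff_of_subset subset_union_right |>.mpr
          ⟨x, mem_union_left _ hxA, hxG⟩)
      omega

theorem card_sup_le_of_propU {F : Finset (Finset ℕ)} {k s q : ℕ}
    (hF : ∀ A ∈ F, A.card = k) (hU : propU F s q) (hs : s ≠ 0) (hq : q + 1 < k + s) :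
    (F.sup id).card ≤ q := by
  rcases F.eq_empty_or_nonempty with hempty | ⟨A₀, hA₀⟩
  · simp [hempty]
  · obtain ⟨m, rfl⟩ := Nat.exists_eq_succ_of_ne_zero hs
    obtain ⟨G, hGF, hG⟩ := exists_fin_members_min_card_sup_le hA₀ m
    have hUG := hU G hGF
    rw [hF A₀ hA₀] at hG
    omega

theorem card_le_choose_card_sup_s6 {α : Type*} [DecidableEq α] {F : Finset (Finset α)} {k : ℕ}
    (hF : ∀ A ∈ F, A.card = k) : F.card ≤ (F.sup id).card.choose k := by
  rw [← card_powersetCard]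
  exact card_le_card fun A hA => mem_powersetCard.mpr ⟨le_sup (f := id) hA, hF A hA⟩

theorem propU_of_forall_subset {F : Finset (Finset ℕ)} {X : Finset ℕ}
    (hF : ∀ A ∈ F, A ⊆ X) (s : ℕ) : propU F s X.card :=
  fun _ hG => card_le_card (Finset.sup_le fun i _ => hF _ (hG i))

theorem stmt6_general (n k s q : ℕ) (hs : 2 ≤ s)
    (hq2 : q ≤ k + s - 2) (hn : n > q) :
    mMax n k s q = Nat.choose q k := by
  apply le_antisymm
  · refine Finset.sup_le fun F hF => ?_
    obtain ⟨hFsub, hFU⟩ := mem_filter.mp hF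
    have hFk : ∀ A ∈ F, A.card = k := fun A hA =>
      (mem_powersetCard.mp (mem_powerset.mp hFsub hA)).2
    exact (card_le_choose_card_sup_s6 hFk).trans
      (Nat.choose_le_choose k (card_sup_le_of_propU hFk hFU (by omega) (by omega)))
  · have hmem : powersetCard k (Icc 1 q) ∈
        (powersetCard k (Icc 1 n)).powerset.filter fun F => propU F s q := by
      refine mem_filter.mpr
        ⟨mem_powerset.mpr (powersetCard_mono (Icc_subset_Icc_right hn.le)), ?_⟩
      simpa using
        propU_of_forall_subset (X := Icc 1 q) (fun A hA => (mem_powersetCard.mp hA).1) s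
    calc q.choose k = (powersetCard k (Icc 1 q)).card := by simp
      _ ≤ mMax n k s q := le_sup hmem

/-- Claim 2.3 of the paper, `m(n,k,s,q) = C(q,k)` for `k ≤ q ≤ k+s-2`. -/
theorem stmt6 (n k s q : ℕ) (hk : 1 ≤ k) (hs : 2 ≤ s) (hq1 : k ≤ q)
    (hq2 : q ≤ k + s - 2) (hn : n > q) :
    mMax n k s q = Nat.choose q k :=
  stmt6_general n k s q hs hq2 hn
end

section
/- Let s ≥ 2 and n ≥ 2s+2 be integers, and let F ⊆ C([n],3) be a shifted family with property U(s, 2s+1) such that {1, 2, 2s+2} ∈ F. Then ν(F) ≤ (s+1)/2. -/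
open Finset
open scoped Classical

/-!
Let `S` be a matching in `F` with `m` members and `U = ⋃ S`, so `|U| = 3m`, and `m < s` by
`U(s, 2s+1)`. Shiftedness puts every triple `{1, 2, j}` with `3 ≤ j ≤ 2s+2` into `F`. Adding
`s - m` such triples with `j ∉ U` to `S` gives at most `s` members whose union has at least
`3m + (s - m)` elements, so `2m + s ≤ 2s + 1`. Enough such `j` exist: otherwise `S`, all triples
`{1, 2, j}` with `j ∉ U`, and `{1, 2, 2s+2}` would be at most `s` members covering `[2s+2]`.
-/

lemma exists_fin_image_eq {α : Type*} [DecidableEq α] {G : Finset α} {s : ℕ}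
    (hG : G.Nonempty) (hGs : G.card ≤ s) : ∃ f : Fin s → α, univ.image f = G := by
  obtain ⟨g₀, hg₀⟩ := hG
  refine ⟨fun i => if h : (i : ℕ) < G.card then G.equivFin.symm ⟨i, h⟩ else g₀, ?_⟩
  apply subset_antisymm
  · intro x hx
    obtain ⟨i, -, rfl⟩ := mem_image.mp hx
    split_ifs <;> simp [hg₀]
  · intro x hx
    refine mem_image.mpr ⟨⟨G.equivFin ⟨x, hx⟩, by omega⟩, mem_univ _, ?_⟩
    simp

lemma propU.card_sup_le_s9 {F : Finset (Finset ℕ)} {s q : ℕ} (hU : propU F s q)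
    {G : Finset (Finset ℕ)} (hGF : G ⊆ F) (hGs : G.card ≤ s) : (G.sup id).card ≤ q := by
  rcases G.eq_empty_or_nonempty with rfl | hG
  · simp
  obtain ⟨f, hf⟩ := exists_fin_image_eq hG hGs
  have hfF : ∀ i, f i ∈ F := fun i => hGF (hf ▸ mem_image_of_mem f (mem_univ i))
  simpa [← hf, sup_image] using hU f hfF

lemma card_sup_id_of_pairwiseDisjoint {α : Type*} [DecidableEq α] {S : Finset (Finset α)}
    {k : ℕ} (hk : ∀ A ∈ S, A.card = k) (hS : (S : Set (Finset α)).PairwiseDisjoint id) :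
    (S.sup id).card = k * S.card := by
  rw [sup_eq_biUnion, card_biUnion hS]
  exact (sum_const_nat hk).trans (mul_comm _ _)

lemma sort_triple {a b c : ℕ} (hab : a < b) (hbc : b < c) :
    ({a, b, c} : Finset ℕ).sort (· ≤ ·) = [a, b, c] := by
  rw [sort_insert _ (by simp; omega) (by simp; omega),
    sort_insert _ (by simp; omega) (by simp; omega), sort_singleton]

lemma shiftLE_triple {a b c a' b' c' : ℕ} (hab : a < b) (hbc : b < c) (hab' : a' < b')
    (hbc' : b' < c') (ha : a ≤ a') (hb : b ≤ b') (hc : c ≤ c') :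
    shiftLE {a, b, c} {a', b', c'} := by
  rw [shiftLE, sort_triple hab hbc, sort_triple hab' hbc']
  exact .cons ha (.cons hb (.cons hc .nil))

lemma IsShifted.triple_mem {n : ℕ} {F : Finset (Finset ℕ)} (hF : IsShifted n 3 F)
    {a b c j : ℕ} (hc : {a, b, c} ∈ F) (ha : 1 ≤ a) (hab : a < b) (hbj : b < j) (hjc : j ≤ c)
    (hcn : c ≤ n) : {a, b, j} ∈ F := by
  refine hF _ hc _ (mem_powersetCard.mpr ⟨?_, ?_⟩) (shiftLE_triple hab hbj hab (by omega)
    le_rfl le_rfl hjc)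
  · intro x hx
    simp only [mem_insert, mem_singleton] at hx
    simp only [mem_Icc]
    omega
  · rw [card_insert_of_notMem (by simp; omega), card_insert_of_notMem (by simp; omega),
      card_singleton]

lemma triple_subset_sup_image {a b j : ℕ} {T : Finset ℕ} (hj : j ∈ T) :
    {a, b, j} ⊆ (T.image fun i => ({a, b, i} : Finset ℕ)).sup id :=
  le_sup (f := id) (mem_image_of_mem _ hj)

section Matching

variable {F S : Finset (Finset ℕ)} {s : ℕ} (hU : propU F s (2 * s + 1)) (hSF : S ⊆ F)
include hU hSF

lemma card_lt_of_pairwiseDisjoint (hS3 : ∀ A ∈ S, A.card = 3)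
    (hS : (S : Set (Finset ℕ)).PairwiseDisjoint id) (hs : 2 ≤ s) : S.card < s := by
  by_contra! h
  obtain ⟨S', hS'S, hS'⟩ := exists_subset_card_eq h
  have hle := hU.card_sup_le_s9 (hS'S.trans hSF) hS'.le
  rw [card_sup_id_of_pairwiseDisjoint (fun A hA => hS3 A (hS'S hA)) (hS.subset hS'S), hS'] at hle
  omega

lemma card_sup_union_insert_le {a b : ℕ} {T : Finset ℕ} (hT : ∀ j ∈ T, {a, b, j} ∈ F)
    (hT0 : T.Nonempty) (hcard : S.card + T.card ≤ s) :
    (S.sup id ∪ insert a (insert b T)).card ≤ 2 * s + 1 := by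
  set G := S ∪ T.image fun j => ({a, b, j} : Finset ℕ)
  have hGF : G ⊆ F := union_subset hSF (by simpa [image_subset_iff] using hT)
  have hGs : G.card ≤ s := by
    have := card_image_le (s := T) (f := fun j => ({a, b, j} : Finset ℕ))
    linarith [card_union_le S (T.image fun j => ({a, b, j} : Finset ℕ))]
  have hcover : S.sup id ∪ insert a (insert b T) ⊆ G.sup id := by
    obtain ⟨j₀, hj₀⟩ := hT0
    rw [sup_union]
    refine union_subset_union le_rfl (insert_subset ?_ (insert_subset ?_ ?_))
    · exact triple_subset_sup_image hj₀ (by simp)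
    · exact triple_subset_sup_image hj₀ (by simp)
    · exact fun j hj => triple_subset_sup_image hj (by simp)
  exact (card_le_card hcover).trans (hU.card_sup_le_s9 hGF hGs)

lemma le_card_add_card_sdiff (hpair : ∀ j ∈ Icc 3 (2 * s + 2), {1, 2, j} ∈ F) :
    s ≤ S.card + (Icc 3 (2 * s + 2) \ S.sup id).card := by
  by_contra! h
  set T := insert (2 * s + 2) (Icc 3 (2 * s + 2) \ S.sup id)
  have hT : ∀ j ∈ T, {1, 2, j} ∈ F := by
    intro j hj
    rcases mem_insert.mp hj with rfl | hj
    · exact hpair _ (mem_Icc.mpr ⟨by omega, le_rfl⟩)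
    · exact hpair j (mem_sdiff.mp hj).1
  have hle := card_sup_union_insert_le hU hSF hT (insert_nonempty _ _)
    (by linarith [card_insert_le (2 * s + 2) (Icc 3 (2 * s + 2) \ S.sup id)])
  have hcover : Icc 1 (2 * s + 2) ⊆ S.sup id ∪ insert 1 (insert 2 T) := by
    intro x hx
    by_cases hxS : x ∈ S.sup id
    · exact mem_union_left _ hxS
    · simp only [mem_Icc] at hx
      simp only [T, mem_union, mem_insert, mem_sdiff, mem_Icc, hxS, not_false_eq_true, and_true,
        false_or]
      omega
  have := card_le_card hcover
  simp only [Nat.card_Icc] at this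
  omega

end Matching

/-- Claim 2.8 of the paper, `ν(F) ≤ (s+1)/2`. -/
theorem stmt9 (n s : ℕ) (hs : 2 ≤ s) (hn : 2 * s + 2 ≤ n)
    (F : Finset (Finset ℕ)) (hF : F ⊆ Finset.powersetCard 3 (Finset.Icc 1 n))
    (hshift : IsShifted n 3 F) (hU : propU F s (2 * s + 1))
    (hmem : ({1, 2, 2 * s + 2} : Finset ℕ) ∈ F) :
    ∀ S ⊆ F, (S : Set (Finset ℕ)).PairwiseDisjoint id → 2 * S.card ≤ s + 1 := by
  intro S hSF hS
  have hS3 : ∀ A ∈ S, A.card = 3 := fun A hA => (mem_powersetCard.mp (hF (hSF hA))).2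
  have hpair : ∀ j ∈ Icc 3 (2 * s + 2), {1, 2, j} ∈ F := fun j hj =>
    hshift.triple_mem hmem le_rfl one_lt_two (mem_Icc.mp hj).1 (mem_Icc.mp hj).2 hn
  have hm := card_lt_of_pairwiseDisjoint hU hSF hS3 hS hs
  set J := Icc 3 (2 * s + 2) \ S.sup id
  have hJ : s ≤ S.card + J.card := le_card_add_card_sdiff hU hSF hpair
  obtain ⟨T, hTJ, hT⟩ := exists_subset_card_eq (show s - S.card ≤ J.card by omega)
  have hUT : Disjoint (S.sup id) T := disjoint_of_subset_right hTJ disjoint_sdiff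
  have hle := card_sup_union_insert_le hU hSF (fun j hj => hpair j (mem_sdiff.mp (hTJ hj)).1)
    (card_pos.mp (by omega)) (by omega)
  have hcard : (S.sup id ∪ T).card ≤ 2 * s + 1 := (card_le_card (union_subset_union
    subset_rfl ((subset_insert _ _).trans (subset_insert _ _)))).trans hle
  rw [card_union_of_disjoint hUT, card_sup_id_of_pairwiseDisjoint hS3 hS] at hcard
  omega
end

section
/- Let n ≥ 3 and let F ⊆ C([n],3) be a shifted family with property U(3,7). Then either F ∈ { A(1,1,n,3), A(4,2,n,3), A(7,3,n,3) }, or |F| < max{ |A(1,1,n,3)|, |A(4,2,n,3)|, |A(7,3,n,3)| }. -/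
/-!
If `F` lies inside one of the three families, it equals that family or is strictly smaller.
Otherwise shiftedness puts `{2,3,4}`, `{1,5,6}` and `{1,2,8}` into `F` (so `n ≥ 8`). The first
two cover `[6]`, so by `U(3,7)` every member of `F` not inside `[6]` is a pair `P ⊆ [6]`
plus one element `c ≥ 7`, and by shiftedness the admissible `c` form an initial segment of
`[7, n]` (the link of `P`). Unions with `{1,2,7}`, `{1,2,8}`, `{1,5,6}`, `{2,3,4}` leave long
links only for `P ∈ {12, 13, 14, 15, 23}`; the membership of `{1,3,8}`, `{1,4,8}`, `{1,5,8}`,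
`{2,3,8}` in `F` decides which of these links are long and, in turn, excludes triples inside
`[6]`. Each of the five resulting cases keeps `|F|` below `max(35, 6n - 20)`, while
`|A(7,3,n,3)| = 35` and `|A(4,2,n,3)| ≥ 6n - 20`.
-/

open Finset
open scoped Classical

lemma exists_eq_triple {A : Finset ℕ} (h : A.card = 3) :
    ∃ a b c, a < b ∧ b < c ∧ A = {a, b, c} := by
  obtain ⟨l, hl⟩ : ∃ l, A.sort (· ≤ ·) = l := ⟨_, rfl⟩
  have hlen : l.length = 3 := by rw [← hl, length_sort, h]
  have hsort : l.Pairwise (· < ·) := hl ▸ A.sortedLT_sort.pairwise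
  have hA : A = l.toFinset := by rw [← hl, sort_toFinset]
  match l, hlen with
  | [a, b, c], _ =>
    simp only [List.pairwise_cons, List.mem_cons, List.not_mem_nil] at hsort
    exact ⟨a, b, c, hsort.1 b (by simp), hsort.2.1 c (by simp), by simp [hA]⟩

lemma IsShifted.triple_mem_s11 {n : ℕ} {F : Finset (Finset ℕ)} (hshift : IsShifted n 3 F)
    (hF : F ⊆ powersetCard 3 (Icc 1 n)) {a b c x y z : ℕ} (hA : {a, b, c} ∈ F)
    (h : 0 < x ∧ x < y ∧ y < z ∧ a < b ∧ b < c ∧ x ≤ a ∧ y ≤ b ∧ z ≤ c) :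
    {x, y, z} ∈ F := by
  obtain ⟨hx, hxy, hyz, hab, hbc, hxa, hyb, hzc⟩ := h
  have hcn : c ≤ n := (mem_Icc.1 ((mem_powersetCard.1 (hF hA)).1 (by simp))).2
  refine hshift _ hA _ (mem_powersetCard.2 ⟨?_, ?_⟩) ?_
  · intro t ht
    simp only [mem_insert, mem_singleton] at ht
    rw [mem_Icc]
    omega
  · rw [card_insert_of_notMem (by simp; omega), card_pair hyz.ne]
  · rw [shiftLE, sort_triple hab hbc, sort_triple hxy hyz]
    exact .cons hxa (.cons hyb (.cons hzc .nil))

lemma propU.card_union_le {F : Finset (Finset ℕ)} {q : ℕ} (hU : propU F 3 q)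
    {A B C : Finset ℕ} (hA : A ∈ F) (hB : B ∈ F) (hC : C ∈ F) : (A ∪ B ∪ C).card ≤ q := by
  refine (card_le_card ?_).trans (hU ![A, B, C] fun i => by fin_cases i <;> assumption)
  refine union_subset (union_subset ?_ ?_) ?_ <;>
    [exact le_sup (f := ![A, B, C]) (mem_univ 0); exact le_sup (f := ![A, B, C]) (mem_univ 1);
      exact le_sup (f := ![A, B, C]) (mem_univ 2)]

lemma propU.notMem_of_lt_card_union {F : Finset (Finset ℕ)} {q : ℕ} (hU : propU F 3 q)
    {A B C : Finset ℕ} (hB : B ∈ F) (hC : C ∈ F) (h : q < (A ∪ B ∪ C).card) : A ∉ F :=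
  fun hA => (hU.card_union_le hA hB hC).not_gt h

lemma exists_eq_triple_of_mem {n : ℕ} {A : Finset ℕ} (hA : A ∈ powersetCard 3 (Icc 1 n)) :
    ∃ a b c, 0 < a ∧ a < b ∧ b < c ∧ c ≤ n ∧ A = {a, b, c} := by
  obtain ⟨hAn, hcard⟩ := mem_powersetCard.1 hA
  obtain ⟨a, b, c, hab, hbc, rfl⟩ := exists_eq_triple hcard
  exact ⟨a, b, c, (mem_Icc.1 (hAn (by simp))).1, hab, hbc, (mem_Icc.1 (hAn (by simp))).2, rfl⟩

lemma mem_famA_of_subset {p r n k : ℕ} {A B : Finset ℕ} (hA : A ∈ powersetCard k (Icc 1 n))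
    (hBA : B ⊆ A) (hBp : B ⊆ Icc 1 p) (hB : r ≤ B.card) : A ∈ famA p r n k :=
  mem_filter.2 ⟨hA, hB.trans (card_le_card (subset_inter hBA hBp))⟩

lemma famA_self {p n k : ℕ} (hpn : p ≤ n) : famA p k n k = powersetCard k (Icc 1 p) := by
  ext A
  simp only [famA, mem_filter, mem_powersetCard]
  constructor
  · rintro ⟨⟨-, hcard⟩, hk⟩
    exact ⟨inter_eq_left.1 (eq_of_subset_of_card_le inter_subset_left (hcard ▸ hk)), hcard⟩
  · rintro ⟨hAp, hcard⟩
    exact ⟨⟨hAp.trans (Icc_subset_Icc_right hpn), hcard⟩, by rw [inter_eq_left.2 hAp, hcard]⟩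

lemma card_famA_ge {p r n : ℕ} (hpn : p ≤ n) :
    p.choose r * (n - p) + p.choose (r + 1) ≤ (famA p r n (r + 1)).card := by
  set S := (powersetCard r (Icc 1 p) ×ˢ Icc (p + 1) n).image fun x => insert x.2 x.1
  have hout : ∀ {c}, c ∈ Icc (p + 1) n → c ∉ Icc 1 p := by simp +contextual [mem_Icc]
  have hinter : ∀ x ∈ powersetCard r (Icc 1 p) ×ˢ Icc (p + 1) n,
      insert x.2 x.1 ∩ Icc 1 p = x.1 ∧ insert x.2 x.1 \ Icc 1 p = {x.2} := by
    rintro ⟨P, c⟩ hx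
    obtain ⟨hP, hc⟩ := mem_product.1 hx
    refine ⟨by rw [insert_inter_of_notMem (hout hc), inter_eq_left.2 (mem_powersetCard.1 hP).1],
      by rw [insert_sdiff_of_notMem _ (hout hc), sdiff_eq_empty_iff_subset.2
        (mem_powersetCard.1 hP).1, insert_empty]⟩
  have hS : S.card = p.choose r * (n - p) := by
    rw [card_image_of_injOn, card_product, card_powersetCard, Nat.card_Icc, Nat.card_Icc,
      Nat.add_sub_cancel, Nat.add_sub_add_right]
    intro x hx y hy hxy
    simp only at hxy
    have h₁ := (hinter x hx).1
    have h₂ := (hinter x hx).2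
    rw [hxy, (hinter y hy).1] at h₁
    rw [hxy, (hinter y hy).2, singleton_inj] at h₂
    exact Prod.ext h₁.symm h₂.symm
  have hSA : S ⊆ famA p r n (r + 1) := by
    simp only [S, image_subset_iff, mem_product, mem_powersetCard, Prod.forall]
    intro P c ⟨⟨hP, hPr⟩, hc⟩
    have hcn := mem_Icc.1 hc
    refine mem_famA_of_subset (B := P) (mem_powersetCard.2 ⟨insert_subset ?_ ?_, ?_⟩)
      (subset_insert _ _) hP hPr.ge
    · exact mem_Icc.2 ⟨by omega, hcn.2⟩
    · exact hP.trans (Icc_subset_Icc_right hpn)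
    · rw [card_insert_of_notMem fun h => hout hc (hP h), hPr]
  have hdisj : Disjoint S (powersetCard (r + 1) (Icc 1 p)) := by
    simp only [S, disjoint_left, mem_image, mem_powersetCard, not_and]
    rintro _ ⟨⟨P, c⟩, hx, rfl⟩ hsub
    exact absurd (hsub (mem_insert_self _ _)) (hout (mem_product.1 hx).2)
  calc p.choose r * (n - p) + p.choose (r + 1)
      = (S ∪ powersetCard (r + 1) (Icc 1 p)).card := by
        rw [card_union_of_disjoint hdisj, hS, card_powersetCard, Nat.card_Icc, Nat.add_sub_cancel]
    _ ≤ _ := card_le_card <| union_subset hSA fun A hA =>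
        mem_famA_of_subset (powersetCard_mono (Icc_subset_Icc_right hpn) hA) subset_rfl
          (mem_powersetCard.1 hA).1 (by rw [(mem_powersetCard.1 hA).2]; omega)

section Shifted

variable {n : ℕ} {F : Finset (Finset ℕ)}

lemma IsShifted.mem_234_of_not_subset (hshift : IsShifted n 3 F)
    (hF : F ⊆ powersetCard 3 (Icc 1 n)) (h : ¬F ⊆ famA 1 1 n 3) : {2, 3, 4} ∈ F := by
  obtain ⟨A, hAF, hA⟩ := not_subset.1 h
  obtain ⟨a, b, c, ha, hab, hbc, -, rfl⟩ := exists_eq_triple_of_mem (hF hAF)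
  have ha1 : a ≠ 1 := by
    rintro rfl
    exact hA (mem_famA_of_subset (B := {1}) (hF hAF) (by simp) (by simp) le_rfl)
  exact hshift.triple_mem_s11 hF hAF (by omega)

lemma IsShifted.mem_156_of_not_subset (hshift : IsShifted n 3 F)
    (hF : F ⊆ powersetCard 3 (Icc 1 n)) (h : ¬F ⊆ famA 4 2 n 3) : {1, 5, 6} ∈ F := by
  obtain ⟨A, hAF, hA⟩ := not_subset.1 h
  obtain ⟨a, b, c, ha, hab, hbc, -, rfl⟩ := exists_eq_triple_of_mem (hF hAF)
  have hb : ¬b ≤ 4 := fun hb => hA <| mem_famA_of_subset (B := {a, b}) (hF hAF)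
    (by simp [insert_subset_iff]) (by simp [insert_subset_iff]; omega) (card_pair hab.ne).ge
  exact hshift.triple_mem_s11 hF hAF (by omega)

lemma IsShifted.mem_128_of_not_subset (hshift : IsShifted n 3 F)
    (hF : F ⊆ powersetCard 3 (Icc 1 n)) (h : ¬F ⊆ famA 7 3 n 3) : {1, 2, 8} ∈ F := by
  obtain ⟨A, hAF, hA⟩ := not_subset.1 h
  obtain ⟨a, b, c, ha, hab, hbc, -, rfl⟩ := exists_eq_triple_of_mem (hF hAF)
  have hc : ¬c ≤ 7 := fun hc => hA <| mem_famA_of_subset (hF hAF) subset_rfl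
    (by simp [insert_subset_iff]; omega) (mem_powersetCard.1 (hF hAF)).2.ge
  exact hshift.triple_mem_s11 hF hAF (by omega)

def link (F : Finset (Finset ℕ)) (n : ℕ) (P : Finset ℕ) : Finset ℕ :=
  (Icc 7 n).filter fun c => P ∪ {c} ∈ F

lemma card_link_le (P : Finset ℕ) : (link F n P).card ≤ n - 6 :=
  (card_le_card (filter_subset _ _)).trans (by simp)

lemma pair_union_singleton (p q c : ℕ) : ({p, q} ∪ {c} : Finset ℕ) = {p, q, c} := by
  rw [insert_union, singleton_union]

lemma IsShifted.card_link_le_of_notMem (hshift : IsShifted n 3 F)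
    (hF : F ⊆ powersetCard 3 (Icc 1 n)) {p q d : ℕ} (hpqd : 0 < p ∧ p < q ∧ q < 7 ∧ 7 ≤ d)
    (hd : {p, q, d} ∉ F) : (link F n {p, q}).card ≤ d - 7 := by
  refine (card_le_card fun c hc => ?_).trans (Nat.card_Ico 7 d).le
  obtain ⟨hc7, hcF⟩ := mem_filter.1 hc
  rw [pair_union_singleton] at hcF
  rw [mem_Icc] at hc7
  exact mem_Ico.2 ⟨hc7.1, lt_of_not_ge fun hdc => hd (hshift.triple_mem_s11 hF hcF (by omega))⟩

end Shifted

section Mixed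

variable {n : ℕ} {F : Finset (Finset ℕ)}

lemma card_filter_subset_add_card_le {k : ℕ} (hF : ∀ A ∈ F, A.card = k)
    {E : Finset (Finset ℕ)} {T : Finset ℕ} (hE : E ⊆ powersetCard k T) (hEF : ∀ B ∈ E, B ∉ F) :
    (F.filter (· ⊆ T)).card + E.card ≤ T.card.choose k := by
  rw [← card_union_of_disjoint (disjoint_left.2 fun A hA hAE => hEF A hAE (mem_filter.1 hA).1),
    ← card_powersetCard]
  refine card_le_card (union_subset (fun A hA => ?_) hE)
  obtain ⟨hAF, hAT⟩ := mem_filter.1 hA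
  exact mem_powersetCard.2 ⟨hAT, hF A hAF⟩

lemma exists_eq_union_singleton (hF : F ⊆ powersetCard 3 (Icc 1 n)) (hU : propU F 3 7)
    (h234 : {2, 3, 4} ∈ F) (h156 : {1, 5, 6} ∈ F) {A : Finset ℕ} (hA : A ∈ F)
    (hA6 : ¬A ⊆ Icc 1 6) :
    A ∩ Icc 1 6 ∈ powersetCard 2 (Icc 1 6) ∧ ∃ c ∈ link F n (A ∩ Icc 1 6), A = A ∩ Icc 1 6 ∪ {c} := by
  obtain ⟨hAn, hA3⟩ := mem_powersetCard.1 (hF hA)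
  have h7 : (A ∪ Icc 1 6).card ≤ 7 := by
    have := hU.card_union_le hA h234 h156
    rwa [union_assoc, show ({2, 3, 4} ∪ {1, 5, 6} : Finset ℕ) = Icc 1 6 by decide] at this
  have hout : (A \ Icc 1 6).card = 1 := by
    have h₁ := card_sdiff_add_card A (Icc 1 6)
    have h₂ : A \ Icc 1 6 ≠ ∅ := by rwa [Ne, sdiff_eq_empty_iff_subset]
    have h₃ := card_pos.2 (nonempty_iff_ne_empty.2 h₂)
    simp only [Nat.card_Icc] at h₁
    omega
  obtain ⟨c, hc⟩ := card_eq_one.1 hout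
  have hAc : A = A ∩ Icc 1 6 ∪ {c} := by rw [← hc, union_comm, sdiff_union_inter]
  have hcA : c ∈ A \ Icc 1 6 := hc ▸ mem_singleton_self c
  obtain ⟨hcA, hc6⟩ := mem_sdiff.1 hcA
  have hcn := mem_Icc.1 (hAn hcA)
  have h₄ := card_inter_add_card_sdiff A (Icc 1 6)
  have hc7 : 7 ≤ c := lt_of_not_ge fun h => hc6 (mem_Icc.2 ⟨hcn.1, h⟩)
  exact ⟨mem_powersetCard.2 ⟨inter_subset_right, by omega⟩, c,
    mem_filter.2 ⟨mem_Icc.2 ⟨hc7, hcn.2⟩, hAc ▸ hA⟩, hAc⟩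

lemma card_le_card_filter_add_sum_link (hF : F ⊆ powersetCard 3 (Icc 1 n)) (hU : propU F 3 7)
    (h234 : {2, 3, 4} ∈ F) (h156 : {1, 5, 6} ∈ F) :
    F.card ≤ (F.filter (· ⊆ Icc 1 6)).card +
      ∑ P ∈ powersetCard 2 (Icc 1 6), (link F n P).card := by
  calc F.card ≤ (F.filter (· ⊆ Icc 1 6) ∪
        (powersetCard 2 (Icc 1 6)).biUnion fun P => (link F n P).image (P ∪ {·})).card := by
        refine card_le_card fun A hA => ?_
        by_cases hA6 : A ⊆ Icc 1 6
        · exact mem_union_left _ (mem_filter.2 ⟨hA, hA6⟩)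
        obtain ⟨hP, c, hc, hAc⟩ := exists_eq_union_singleton hF hU h234 h156 hA hA6
        exact mem_union_right _ (mem_biUnion.2 ⟨_, hP, mem_image.2 ⟨c, hc, hAc.symm⟩⟩)
    _ ≤ _ := (card_union_le _ _).trans <|
        Nat.add_le_add_left (card_biUnion_le.trans (sum_le_sum fun _ _ => card_image_le)) _

lemma card_le_card_lower_add_links (hF : F ⊆ powersetCard 3 (Icc 1 n))
    (hshift : IsShifted n 3 F) (hU : propU F 3 7) (h234 : {2, 3, 4} ∈ F)
    (h156 : {1, 5, 6} ∈ F) (h128 : {1, 2, 8} ∈ F) :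
    F.card ≤ (F.filter (· ⊆ Icc 1 6)).card + (link F n {1, 2}).card + (link F n {1, 3}).card +
      (link F n {1, 4}).card + (link F n {1, 5}).card + (link F n {2, 3}).card + 4 := by
  have hsum := card_le_card_filter_add_sum_link hF hU h234 h156
  rw [show powersetCard 2 (Icc 1 6) = {{1, 2}, {1, 3}, {1, 4}, {1, 5}, {1, 6}, {2, 3}, {2, 4},
    {2, 5}, {2, 6}, {3, 4}, {3, 5}, {3, 6}, {4, 5}, {4, 6}, {5, 6}} by decide] at hsum
  simp (disch := decide) only [sum_insert, sum_singleton] at hsum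
  have h347 : ({3, 4, 7} : Finset ℕ) ∉ F := hU.notMem_of_lt_card_union h128 h156 (by decide)
  have link_empty : ∀ p q, 3 ≤ p ∧ p < q ∧ q < 7 → (link F n {p, q}).card ≤ 0 := fun p q hpq =>
    hshift.card_link_le_of_notMem hF (d := 7) (by omega)
      fun h => h347 (hshift.triple_mem_s11 hF h (by omega))
  have h16 := hshift.card_link_le_of_notMem hF (p := 1) (q := 6) (d := 8) (by decide) fun h =>
    hU.notMem_of_lt_card_union (A := {1, 5, 7}) h h234 (by decide)
      (hshift.triple_mem_s11 hF h (by decide))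
  have h26 := hshift.card_link_le_of_notMem hF (p := 2) (q := 6) (d := 8) (by decide) fun h =>
    hU.notMem_of_lt_card_union (A := {1, 5, 7}) h h234 (by decide)
      (hshift.triple_mem_s11 hF h (by decide))
  have h24 := hshift.card_link_le_of_notMem hF (p := 2) (q := 4) (d := 8) (by decide) fun h =>
    hU.notMem_of_lt_card_union (A := {1, 4, 7}) (B := {2, 3, 8})
      (hshift.triple_mem_s11 hF h (by decide)) h156 (by decide) (hshift.triple_mem_s11 hF h (by decide))
  have h25 := hshift.card_link_le_of_notMem hF (p := 2) (q := 5) (d := 8) (by decide) fun h =>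
    hU.notMem_of_lt_card_union (A := {1, 4, 7}) (B := {2, 3, 8})
      (hshift.triple_mem_s11 hF h (by decide)) h156 (by decide) (hshift.triple_mem_s11 hF h (by decide))
  have := link_empty 3 4 (by decide)
  have := link_empty 3 5 (by decide)
  have := link_empty 3 6 (by decide)
  have := link_empty 4 5 (by decide)
  have := link_empty 4 6 (by decide)
  have := link_empty 5 6 (by decide)
  omega

lemma card_lower_le (hF : F ⊆ powersetCard 3 (Icc 1 n)) {E : Finset (Finset ℕ)}
    (hE : E ⊆ powersetCard 3 (Icc 1 6)) (hEF : ∀ B ∈ E, B ∉ F) :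
    (F.filter (· ⊆ Icc 1 6)).card ≤ 20 - E.card :=
  Nat.le_sub_of_add_le
    (card_filter_subset_add_card_le (fun _ hA => (mem_powersetCard.1 (hF hA)).2) hE hEF)

lemma card_lower_le_of_138_mem (hF : F ⊆ powersetCard 3 (Icc 1 n)) (hshift : IsShifted n 3 F)
    (hU : propU F 3 7) (h128 : {1, 2, 8} ∈ F) (h138 : {1, 3, 8} ∈ F) :
    (F.filter (· ⊆ Icc 1 6)).card ≤ 19 := by
  have h127 : ({1, 2, 7} : Finset ℕ) ∈ F := hshift.triple_mem_s11 hF h128 (by decide)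
  refine (card_lower_le hF (E := {{4, 5, 6}}) (by decide) ?_).trans (by decide)
  simpa using hU.notMem_of_lt_card_union h127 h138 (by decide)

lemma card_lower_le_of_148_mem (hF : F ⊆ powersetCard 3 (Icc 1 n)) (hshift : IsShifted n 3 F)
    (hU : propU F 3 7) (h128 : {1, 2, 8} ∈ F) (h148 : {1, 4, 8} ∈ F) :
    (F.filter (· ⊆ Icc 1 6)).card ≤ 17 := by
  have h127 : ({1, 2, 7} : Finset ℕ) ∈ F := hshift.triple_mem_s11 hF h128 (by decide)
  have h137 : ({1, 3, 7} : Finset ℕ) ∈ F := hshift.triple_mem_s11 hF h148 (by decide)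
  have h138 : ({1, 3, 8} : Finset ℕ) ∈ F := hshift.triple_mem_s11 hF h148 (by decide)
  refine (card_lower_le hF (E := {{4, 5, 6}, {3, 5, 6}, {2, 5, 6}}) (by decide) ?_).trans
    (by decide)
  simp only [mem_insert, mem_singleton, forall_eq_or_imp, forall_eq]
  exact ⟨hU.notMem_of_lt_card_union h127 h138 (by decide),
    hU.notMem_of_lt_card_union h127 h148 (by decide),
    hU.notMem_of_lt_card_union h137 h148 (by decide)⟩

lemma card_lower_le_of_158_mem (hF : F ⊆ powersetCard 3 (Icc 1 n)) (hshift : IsShifted n 3 F)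
    (hU : propU F 3 7) (h128 : {1, 2, 8} ∈ F) (h158 : {1, 5, 8} ∈ F) :
    (F.filter (· ⊆ Icc 1 6)).card ≤ 14 := by
  have h127 : ({1, 2, 7} : Finset ℕ) ∈ F := hshift.triple_mem_s11 hF h128 (by decide)
  have h137 : ({1, 3, 7} : Finset ℕ) ∈ F := hshift.triple_mem_s11 hF h158 (by decide)
  have h147 : ({1, 4, 7} : Finset ℕ) ∈ F := hshift.triple_mem_s11 hF h158 (by decide)
  have h138 : ({1, 3, 8} : Finset ℕ) ∈ F := hshift.triple_mem_s11 hF h158 (by decide)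
  have h148 : ({1, 4, 8} : Finset ℕ) ∈ F := hshift.triple_mem_s11 hF h158 (by decide)
  refine (card_lower_le hF (E := {{4, 5, 6}, {3, 5, 6}, {2, 5, 6}, {2, 3, 6}, {2, 4, 6},
    {3, 4, 6}}) (by decide) ?_).trans (by decide)
  simp only [mem_insert, mem_singleton, forall_eq_or_imp, forall_eq]
  exact ⟨hU.notMem_of_lt_card_union h127 h138 (by decide),
    hU.notMem_of_lt_card_union h127 h148 (by decide),
    hU.notMem_of_lt_card_union h137 h148 (by decide),
    hU.notMem_of_lt_card_union h147 h158 (by decide),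
    hU.notMem_of_lt_card_union h137 h158 (by decide),
    hU.notMem_of_lt_card_union h127 h158 (by decide)⟩

lemma card_lt_of_mem_234_156_128 (hF : F ⊆ powersetCard 3 (Icc 1 n))
    (hshift : IsShifted n 3 F) (hU : propU F 3 7) (h234 : {2, 3, 4} ∈ F)
    (h156 : {1, 5, 6} ∈ F) (h128 : {1, 2, 8} ∈ F) :
    F.card < max 35 (6 * (n - 4) + 4) := by
  have hn : 8 ≤ n := (mem_Icc.1 ((mem_powersetCard.1 (hF h128)).1 (by simp))).2
  have hsum := card_le_card_lower_add_links hF hshift hU h234 h156 h128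
  have hlower := card_lower_le hF (E := ∅) (by simp) (by simp)
  have := card_link_le (F := F) (n := n) {1, 2}
  have := card_link_le (F := F) (n := n) {1, 3}
  have := card_link_le (F := F) (n := n) {1, 4}
  have := card_link_le (F := F) (n := n) {1, 5}
  have := card_link_le (F := F) (n := n) {2, 3}
  have one : ∀ {p q}, 0 < p ∧ p < q ∧ q < 7 → {p, q, 8} ∉ F → (link F n {p, q}).card ≤ 1 :=
    fun hpq => hshift.card_link_le_of_notMem hF (by omega)
  have h238_of_148 : ({1, 4, 8} : Finset ℕ) ∈ F → ({2, 3, 8} : Finset ℕ) ∉ F := fun h148 =>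
    hU.notMem_of_lt_card_union (B := {1, 4, 7}) (hshift.triple_mem_s11 hF h148 (by decide)) h156
      (by decide)
  by_cases h158 : ({1, 5, 8} : Finset ℕ) ∈ F
  · have := card_lower_le_of_158_mem hF hshift hU h128 h158
    have := one (by decide) (h238_of_148 (hshift.triple_mem_s11 hF h158 (by decide)))
    omega
  have := one (by decide) h158
  by_cases h238 : ({2, 3, 8} : Finset ℕ) ∈ F
  · have := card_lower_le_of_138_mem hF hshift hU h128 (hshift.triple_mem_s11 hF h238 (by decide))
    have := one (by decide) fun h148 => h238_of_148 h148 h238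
    omega
  have := one (by decide) h238
  by_cases h148 : ({1, 4, 8} : Finset ℕ) ∈ F
  · have := card_lower_le_of_148_mem hF hshift hU h128 h148
    omega
  have := one (by decide) h148
  by_cases h138 : ({1, 3, 8} : Finset ℕ) ∈ F
  · have := card_lower_le_of_138_mem hF hshift hU h128 h138
    omega
  have := one (by decide) h138
  omega

end Mixed

theorem stmt11_general (n : ℕ)
    (F : Finset (Finset ℕ)) (hF : F ⊆ Finset.powersetCard 3 (Finset.Icc 1 n))
    (hshift : IsShifted n 3 F) (hU : propU F 3 7) :
    F = famA 1 1 n 3 ∨ F = famA 4 2 n 3 ∨ F = famA 7 3 n 3 ∨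
      F.card < max (famA 1 1 n 3).card (max (famA 4 2 n 3).card (famA 7 3 n 3).card) := by
  have eq_or_lt {G : Finset (Finset ℕ)} (h : F ⊆ G) : F = G ∨ F.card < G.card :=
    (LE.le.eq_or_ssubset h).imp_right card_lt_card
  by_cases h1 : F ⊆ famA 1 1 n 3
  · exact (eq_or_lt h1).imp_right fun h => .inr <| .inr <| h.trans_le (le_max_left _ _)
  by_cases h2 : F ⊆ famA 4 2 n 3
  · exact .inr <| (eq_or_lt h2).imp_right fun h => .inr <| h.trans_le <|
      (le_max_left _ _).trans (le_max_right _ _)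
  by_cases h3 : F ⊆ famA 7 3 n 3
  · exact .inr <| .inr <| (eq_or_lt h3).imp_right fun h => h.trans_le <|
      (le_max_right _ _).trans (le_max_right _ _)
  have h128 := hshift.mem_128_of_not_subset hF h3
  have hn : 8 ≤ n := (mem_Icc.1 ((mem_powersetCard.1 (hF h128)).1 (by simp))).2
  refine .inr <| .inr <| .inr <| (card_lt_of_mem_234_156_128 hF hshift hU
    (hshift.mem_234_of_not_subset hF h1) (hshift.mem_156_of_not_subset hF h2) h128).trans_le ?_
  have h73 : (famA 7 3 n 3).card = 35 := by rw [famA_self (by omega)]; decide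
  have h42 : 6 * (n - 4) + 4 ≤ (famA 4 2 n 3).card := card_famA_ge (p := 4) (r := 2) (by omega)
  omega

/-- Theorem 2.9 of the paper, the complete solution for `k = s = 3`, `q = 7`. -/
theorem stmt11 (n : ℕ) (hn : 3 ≤ n)
    (F : Finset (Finset ℕ)) (hF : F ⊆ Finset.powersetCard 3 (Finset.Icc 1 n))
    (hshift : IsShifted n 3 F) (hU : propU F 3 7) :
    F = famA 1 1 n 3 ∨ F = famA 4 2 n 3 ∨ F = famA 7 3 n 3 ∨
      F.card < max (famA 1 1 n 3).card (max (famA 4 2 n 3).card (famA 7 3 n 3).card) :=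
  stmt11_general n F hF hshift hU
end

section
/- Fix integers n, k, s, p, r with 1 ≤ r ≤ k and r ≤ p ≤ s+r−1, set q = (k−r)(s+1)+p, and let F ⊆ C([n],k) have property U(s+1, q). For B ⊆ [p+1], let F(B) := { G \ [p+1] : G ∈ F, G ∩ [p+1] = B }. Then for every B ⊆ [p+1] with |B| ≤ r−1 one has ν(F(B)) ≤ s, i.e., F(B) contains no s+1 pairwise disjoint sets. -/
open Finset
open scoped Classical

/-!
If `F(B)` contained `s + 1` pairwise disjoint sets, lift them to members `G₀, …, Gₛ` of `F` with
common trace `B` on `[p+1]`. Their union is `B` together with the disjoint sets `Gᵢ \ [p+1]`, each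
of size `k - |B|`, so it has `(s+1)(k - |B|) + |B|` elements. As `|B| < r`, this is
`(k-r)(s+1) + s(r - |B|) + r ≥ (k-r)(s+1) + s + r > (k-r)(s+1) + p = q`, contradicting
`U(s+1, q)`.
-/

theorem Finset.exists_fin_lift_of_subset_image {β γ : Type*} [DecidableEq γ] {f : β → γ}
    {A : Finset β} {S : Finset γ} (hS : S ⊆ A.image f) {m : ℕ} (hm : m ≤ S.card) :
    ∃ g : Fin m → β, (∀ i, g i ∈ A) ∧ (∀ i, f (g i) ∈ S) ∧ Function.Injective (f ∘ g) := by
  obtain ⟨T, hTS, hT⟩ := exists_subset_card_eq hm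
  have hlift : ∀ y : T, ∃ x ∈ A, f x = y := fun y => mem_image.mp (hS (hTS y.2))
  choose g hgA hgf using hlift
  let e := T.equivFinOfCardEq hT
  refine ⟨fun i => g (e.symm i), fun i => hgA _, fun i => ?_, fun i j hij => ?_⟩
  · simpa only [hgf] using hTS (e.symm i).2
  · simp only [Function.comp_apply, hgf] at hij
    exact e.symm.injective (Subtype.ext hij)

theorem Finset.card_sup_eq_of_inter_eq_of_pairwise_disjoint_sdiff {α ι : Type*} [DecidableEq α]
    [Fintype ι] [Nonempty ι] {G : ι → Finset α} {P B : Finset α} (hB : ∀ i, G i ∩ P = B)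
    (hd : Pairwise fun i j => Disjoint (G i \ P) (G j \ P)) :
    (univ.sup G).card = ∑ i, (G i \ P).card + B.card := by
  have hG : G = (fun i => G i \ P) ⊔ fun _ => B :=
    funext fun i => by rw [Pi.sup_apply, sup_eq_union, ← hB i, sdiff_union_inter]
  have hdisjB : Disjoint (univ.biUnion fun i => G i \ P) B :=
    (disjoint_biUnion_left _ _ _).mpr fun i _ => hB i ▸ disjoint_sdiff_inter _ _
  nth_rw 1 [hG]
  rw [sup_sup, sup_const univ_nonempty, sup_eq_biUnion, sup_eq_union,
    card_union_of_disjoint hdisjB, card_biUnion fun i _ j _ hij => hd hij]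

theorem propU.mul_sub_card_add_card_le_of_inter_eq {F : Finset (Finset ℕ)}
    {m k q : ℕ} (hU : propU F (m + 1) q) (hk : ∀ A ∈ F, A.card = k) {P B : Finset ℕ}
    {G : Fin (m + 1) → Finset ℕ} (hGF : ∀ i, G i ∈ F) (hGB : ∀ i, G i ∩ P = B)
    (hd : Pairwise fun i j => Disjoint (G i \ P) (G j \ P)) :
    (m + 1) * (k - B.card) + B.card ≤ q := by
  have hcard : ∀ i, (G i \ P).card = k - B.card := fun i => by
    have := card_inter_add_card_sdiff (G i) P
    rw [hGB i, hk _ (hGF i)] at this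
    omega
  calc (m + 1) * (k - B.card) + B.card = (univ.sup G).card := by
        simp only [card_sup_eq_of_inter_eq_of_pairwise_disjoint_sdiff hGB hd, hcard, sum_const,
          card_univ, Fintype.card_fin, smul_eq_mul]
    _ ≤ q := hU G hGF

theorem Nat.sub_mul_add_lt_mul_sub_add {k s p r b : ℕ} (hr : 1 ≤ r) (hrk : r ≤ k)
    (hps : p ≤ s + r - 1) (hb : b ≤ r - 1) :
    (k - r) * (s + 1) + p < (s + 1) * (k - b) + b := by
  obtain ⟨c, rfl⟩ : ∃ c, k = r + c := ⟨k - r, by omega⟩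
  obtain ⟨d, rfl⟩ : ∃ d, r = b + d + 1 := ⟨r - b - 1, by omega⟩
  rw [show b + d + 1 + c - (b + d + 1) = c by omega, show b + d + 1 + c - b = c + d + 1 by omega]
  have : p ≤ s + b + d := by omega
  nlinarith

theorem stmt17_general (n k s p r q : ℕ) (hr : 1 ≤ r) (hrk : r ≤ k)
    (hps : p ≤ s + r - 1) (hq : q = (k - r) * (s + 1) + p)
    (F : Finset (Finset ℕ)) (hF : F ⊆ Finset.powersetCard k (Finset.Icc 1 n))
    (hU : propU F (s + 1) q)
    (B : Finset ℕ) (hBcard : B.card ≤ r - 1) :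
    ∀ S ⊆ (F.filter fun G => G ∩ Finset.Icc 1 (p + 1) = B).image
        (fun G => G \ Finset.Icc 1 (p + 1)),
      (S : Set (Finset ℕ)).PairwiseDisjoint id → S.card ≤ s := by
  intro S hS hdisj
  by_contra! hcard
  obtain ⟨G, hGmem, hGS, hinj⟩ := exists_fin_lift_of_subset_image hS hcard
  simp only [mem_filter] at hGmem
  have hk : ∀ A ∈ F, A.card = k := fun A hA => (mem_powersetCard.mp (hF hA)).2
  have hle := hU.mul_sub_card_add_card_le_of_inter_eq hk (fun i => (hGmem i).1)
    (fun i => (hGmem i).2) fun i j hij => hdisj (hGS i) (hGS j) (hinj.ne hij)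
  have hlt := Nat.sub_mul_add_lt_mul_sub_add hr hrk hps hBcard
  omega

/-- Claim 3.1 of the paper. -/
theorem stmt17 (n k s p r q : ℕ) (hr : 1 ≤ r) (hrk : r ≤ k) (hrp : r ≤ p)
    (hps : p ≤ s + r - 1) (hq : q = (k - r) * (s + 1) + p)
    (F : Finset (Finset ℕ)) (hF : F ⊆ Finset.powersetCard k (Finset.Icc 1 n))
    (hU : propU F (s + 1) q)
    (B : Finset ℕ) (hB : B ⊆ Finset.Icc 1 (p + 1)) (hBcard : B.card ≤ r - 1) :
    ∀ S ⊆ (F.filter fun G => G ∩ Finset.Icc 1 (p + 1) = B).image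
        (fun G => G \ Finset.Icc 1 (p + 1)),
      (S : Set (Finset ℕ)).PairwiseDisjoint id → S.card ≤ s :=
  stmt17_general n k s p r q hr hrk hps hq F hF hU B hBcard
end

section
/- Fix integers n, k, s, p, r with 1 ≤ r ≤ k and r ≤ p ≤ s+r−1, set q = (k−r)(s+1)+p, and let F ⊆ C([n],k) have property U(s+1, q). For B ⊆ [p+1], let F(B) := { G \ [p+1] : G ∈ F, G ∩ [p+1] = B }. Let B ⊆ [p+1] with |B| = r−1, and let i₁,…,i_{s+1} ∈ [p+1] \ B be (not necessarily distinct) elements with {i₁,…,i_{s+1}} = [p+1] \ B. Then there do not exist sets G₁ ∈ F(B ∪ {i₁}), …, G_{s+1} ∈ F(B ∪ {i_{s+1}}) that are pairwise disjoint; i.e., the families F(B ∪ {i₁}), …, F(B ∪ {i_{s+1}}) are cross-dependent. -/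
open Finset
open scoped Classical

/-!
Take witnesses `H j ∈ F` with `H j ∩ [p+1] = B ∪ {i j}` and `H j \ [p+1] = G j`. Their union
contains all of `[p+1]` (the `i j` cover `[p+1] \ B`) together with the pairwise disjoint
`(k - r)`-sets `G j`, so it has at least `p + 1 + (s + 1)(k - r) = q + 1` elements, against `U(s+1, q)`.
-/

section UnionBound

variable {ι α : Type*} [Fintype ι] [DecidableEq α]

theorem card_sup_inter_add_sum_card_sdiff (H : ι → Finset α) (P : Finset α)
    (hdisj : Pairwise fun a b => Disjoint (H a \ P) (H b \ P)) :
    #(univ.sup H ∩ P) + ∑ j, #(H j \ P) = #(univ.sup H) := by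
  rw [← card_inter_add_card_sdiff (univ.sup H) P, ← Finset.sup_sdiff_right,
    sup_eq_biUnion _ fun j => H j \ P,
    card_biUnion fun a _ b _ hab => hdisj hab]

theorem subset_sup_of_inter_eq_union_singleton [Nonempty ι] (H : ι → Finset α) (P B : Finset α)
    (i : ι → α) (hH : ∀ j, H j ∩ P = B ∪ {i j}) (hcover : univ.image i = P \ B) :
    P ⊆ univ.sup H := by
  intro x hxP
  obtain ⟨j, hxj⟩ : ∃ j, x ∈ B ∪ {i j} := by
    by_cases hxB : x ∈ B
    · exact ⟨Classical.arbitrary ι, mem_union_left _ hxB⟩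
    · obtain ⟨j, -, rfl⟩ := mem_image.mp (hcover ▸ mem_sdiff.mpr ⟨hxP, hxB⟩)
      exact ⟨j, by simp⟩
  rw [← hH j] at hxj
  exact mem_sup.mpr ⟨j, mem_univ j, mem_of_mem_inter_left hxj⟩

end UnionBound

theorem stmt18_general (n k s p r q : ℕ) (hr : 1 ≤ r)
    (hq : q = (k - r) * (s + 1) + p)
    (F : Finset (Finset ℕ)) (hF : F ⊆ Finset.powersetCard k (Finset.Icc 1 n))
    (hU : propU F (s + 1) q)
    (B : Finset ℕ) (hBcard : B.card = r - 1)
    (i : Fin (s + 1) → ℕ)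
    (hcover : Finset.image i Finset.univ = Finset.Icc 1 (p + 1) \ B) :
    ¬ ∃ G : Fin (s + 1) → Finset ℕ,
        (∀ j, G j ∈ (F.filter fun H => H ∩ Finset.Icc 1 (p + 1) = B ∪ {i j}).image
            (fun H => H \ Finset.Icc 1 (p + 1))) ∧
        ∀ j₁ j₂, j₁ ≠ j₂ → Disjoint (G j₁) (G j₂) := by
  rintro ⟨G, hGmem, hdisj⟩
  set P := Finset.Icc 1 (p + 1)
  simp only [mem_image, mem_filter] at hGmem
  choose H hH hHG using hGmem
  have hHF : ∀ j, H j ∈ F := fun j => (hH j).1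
  have hcard_sdiff : ∀ j, #(H j \ P) = k - r := by
    intro j
    have hiB : i j ∉ B := (mem_sdiff.mp (hcover ▸ mem_image_of_mem i (mem_univ j))).2
    have hcard_inter : #(H j ∩ P) = r := by
      rw [(hH j).2, card_union_of_disjoint (disjoint_singleton_right.mpr hiB), hBcard,
        card_singleton]
      omega
    have := card_sdiff_add_card_inter (H j) P
    rw [hcard_inter, (mem_powersetCard.mp (hF (hHF j))).2] at this
    omega
  have hP : P ⊆ univ.sup H :=
    subset_sup_of_inter_eq_union_singleton H P B i (fun j => (hH j).2) hcover
  have hunion := card_sup_inter_add_sum_card_sdiff H P fun a b hab => by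
    simpa only [hHG] using hdisj a b hab
  rw [inter_eq_right.mpr hP, Nat.card_Icc, Finset.sum_congr rfl fun j _ => hcard_sdiff j,
    sum_const, card_univ, Fintype.card_fin, smul_eq_mul] at hunion
  have hU_H := hU H hHF
  rw [hq, mul_comm] at hU_H
  omega

/-- Claim 3.2 of the paper. -/
theorem stmt18 (n k s p r q : ℕ) (hr : 1 ≤ r) (hrk : r ≤ k) (hrp : r ≤ p)
    (hps : p ≤ s + r - 1) (hq : q = (k - r) * (s + 1) + p)
    (F : Finset (Finset ℕ)) (hF : F ⊆ Finset.powersetCard k (Finset.Icc 1 n))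
    (hU : propU F (s + 1) q)
    (B : Finset ℕ) (hB : B ⊆ Finset.Icc 1 (p + 1)) (hBcard : B.card = r - 1)
    (i : Fin (s + 1) → ℕ) (hi : ∀ j, i j ∈ Finset.Icc 1 (p + 1) \ B)
    (hcover : Finset.image i Finset.univ = Finset.Icc 1 (p + 1) \ B) :
    ¬ ∃ G : Fin (s + 1) → Finset ℕ,
        (∀ j, G j ∈ (F.filter fun H => H ∩ Finset.Icc 1 (p + 1) = B ∪ {i j}).image
            (fun H => H \ Finset.Icc 1 (p + 1))) ∧
        ∀ j₁ j₂, j₁ ≠ j₂ → Disjoint (G j₁) (G j₂) :=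
  stmt18_general n k s p r q hr hq F hF hU B hBcard i hcover
end
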